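/- arXiv:2103.10523 — 2 statements merged into one kernel-verified Lean document; each statement's English description precedes it below -/
import Mathlib

section
/- Let G be a finite connected simple graph with m ≥ 2 vertices and n edges, let S be a vertex of G, and let T be a spanning tree of G. Then the absolute value of the determinant of the edgewise Kirchhoff matrix M_{G,S,T} equals the number of spanning trees of G: |det M_{G,S,T}| = t(G). -/
open SimpleGraph

/-- The edges of `G`, each oriented from its smaller endpoint to its larger endpoint. -/
abbrev OrientedEdge {V : Type*} [LinearOrder V] (G : SimpleGraph V) : Type _ :=
  {e : V × V // e.1 < e.2 ∧ G.Adj e.1 e.2}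

/-- Row indices of the edgewise Kirchhoff matrix: the vertices `w ≠ S` together with
the (oriented) edges of `G` not belonging to `T`. -/
abbrev KirchhoffRow {V : Type*} [LinearOrder V] (G T : SimpleGraph V) (S : V) : Type _ :=
  {w : V // w ≠ S} ⊕ {e : OrientedEdge G // ¬ T.Adj e.1.1 e.1.2}

/-- `M` is the edgewise Kirchhoff matrix of `G` with respect to the pole `S` and the
spanning tree `T`:  the row of a vertex `w ≠ S` has entry `+1` in the column of each
edge oriented into `w`, `-1` in the column of each edge oriented out of `w`, and `0`
elsewhere; the row of an edge `f ∉ T` oriented `u → v` has entry `+1` in the column of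
`f`, entry `+1` (resp. `-1`) in the column of every edge of `T` traversed forwards
(resp. backwards) by the unique path in `T` from `v` to `u`, and `0` elsewhere. -/
def IsEdgewiseKirchhoffMatrix {V : Type*} [LinearOrder V] (G T : SimpleGraph V) (S : V)
    (M : Matrix (KirchhoffRow G T S) (OrientedEdge G) ℚ) : Prop :=
  (∀ (w : {w : V // w ≠ S}) (g : OrientedEdge G),
      M (Sum.inl w) g =
        if g.1.2 = w.1 then 1 else if g.1.1 = w.1 then -1 else 0) ∧
  (∀ (f : {e : OrientedEdge G // ¬ T.Adj e.1.1 e.1.2}) (g : OrientedEdge G)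
      (P : T.Walk f.1.1.2 f.1.1.1), P.IsPath →
      M (Sum.inr f) g =
        if g = f.1 then 1
        else if (g.1.1, g.1.2) ∈ P.darts.map SimpleGraph.Dart.toProd then 1
        else if (g.1.2, g.1.1) ∈ P.darts.map SimpleGraph.Dart.toProd then -1
        else 0)

/-!
The rows of `M` indexed by vertices form the reduced signed incidence matrix `B` of `G`, and the
row of a non-tree edge `f` is its fundamental cycle: the indicator of `f` plus the signed
indicator of the tree path closing it. Cycles are orthogonal to the rows of `B`, and on the
non-tree columns these rows form an identity matrix. Ordering the columns as tree edges, then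
non-tree edges, `M = [[B_T, B_N], [C, 1]]` with `C B_Tᵀ + B_Nᵀ = 0`, and multiplying on the
right by `[[B_Tᵀ, 0], [B_Nᵀ, 1]]` gives `det M · det B_T = det (B Bᵀ)`.

A square submatrix of `B` has determinant `±1` when its columns are the edges of a spanning tree
(an inverse is given by the signed indicators of the tree paths from the pole) and `0` otherwise
(a cut gives a left kernel vector, a cycle a right one). So `|det B_T| = 1`, and the Cauchy–Binet
formula gives `det (B Bᵀ) = t(G)`.
-/

namespace Matrix

theorem submatrix_mulVec_comp {m n n' R : Type*} [Fintype n] [Fintype n']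
    [NonUnitalNonAssocSemiring R] (A : Matrix m n R) {φ : n' → n} (hφ : Function.Injective φ)
    {x : n → R} (hx : ∀ j ∉ Set.range φ, x j = 0) : A.submatrix id φ *ᵥ (x ∘ φ) = A *ᵥ x := by
  ext i
  exact Fintype.sum_of_injective φ hφ _ _ (fun j hj => by simp [hx j hj]) fun _ => rfl

variable {m n p R : Type*} [Fintype m] [DecidableEq m] [CommRing R]

theorem det_mul_eq_sum_prod_mul_det_submatrix [Fintype n] (A : Matrix m n R) (B : Matrix n m R) :
    (A * B).det = ∑ φ : m → n, (∏ i, A i (φ i)) * (B.submatrix φ id).det := by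
  have hrows : A * B = fun i => ∑ k, A i k • B k := by
    ext i j
    simp [mul_apply, Finset.sum_apply]
  calc (A * B).det = (detRowAlternating (R := R) (n := m)).toMultilinearMap
        (fun i => ∑ k, A i k • B k) := by rw [← hrows]; rfl
    _ = _ := by
      rw [MultilinearMap.map_sum]
      exact Finset.sum_congr rfl fun φ _ => MultilinearMap.map_smul_univ _ _ _

theorem det_mul_eq_sum_embedding [Fintype n] [DecidableEq n] (A : Matrix m n R)
    (B : Matrix n m R) :
    (A * B).det = ∑ ψ : m ↪ n, (∏ i, A i (ψ i)) * (B.submatrix ψ id).det := by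
  have hvanish : ∀ φ : {φ : m → n // ¬ Function.Injective φ},
      (∏ i, A i (φ.1 i)) * (B.submatrix φ.1 id).det = 0 := by
    rintro ⟨φ, hφ⟩
    obtain ⟨i, j, hij, hne⟩ : ∃ i j, φ i = φ j ∧ i ≠ j := by
      simpa [Function.Injective] using hφ
    rw [det_zero_of_row_eq hne (funext fun k => by simp [hij]), mul_zero]
  rw [det_mul_eq_sum_prod_mul_det_submatrix,
    ← Fintype.sum_subtype_add_sum_subtype Function.Injective, Fintype.sum_eq_zero _ hvanish,
    add_zero]
  exact Fintype.sum_equiv (Equiv.subtypeInjectiveEquivEmbedding m n) _ _ fun _ => rfl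

theorem det_submatrix_mul_det_submatrix (A : Matrix m n R) (B : Matrix n m R) (ψ : m ↪ n) :
    (A.submatrix id ψ).det * (B.submatrix ψ id).det =
      ∑ σ : Equiv.Perm m, (∏ i, A i (ψ (σ i))) * (B.submatrix (ψ ∘ σ) id).det := by
  rw [← det_transpose, det_apply', Finset.sum_mul]
  refine Finset.sum_congr rfl fun σ _ => ?_
  rw [show B.submatrix (ψ ∘ σ) id = (B.submatrix ψ id).submatrix σ id from rfl, det_permute]
  simp only [transpose_apply, submatrix_apply, id_eq]
  ring

/-- The Cauchy–Binet formula, with each set of columns counted once for every ordering. -/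
theorem factorial_card_mul_det_mul [Fintype n] [DecidableEq n] (A : Matrix m n R)
    (B : Matrix n m R) :
    ((Fintype.card m).factorial : R) * (A * B).det =
      ∑ ψ : m ↪ n, (A.submatrix id ψ).det * (B.submatrix ψ id).det := by
  calc ((Fintype.card m).factorial : R) * (A * B).det = ∑ _σ : Equiv.Perm m, (A * B).det := by
        rw [Finset.sum_const, Finset.card_univ, Fintype.card_perm, nsmul_eq_mul]
    _ = ∑ σ : Equiv.Perm m, ∑ ψ : m ↪ n,
          (∏ i, A i (ψ (σ i))) * (B.submatrix (ψ ∘ σ) id).det := by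
        refine Finset.sum_congr rfl fun σ _ => ?_
        rw [det_mul_eq_sum_embedding]
        exact (Fintype.sum_equiv (Equiv.embeddingCongr σ.symm (Equiv.refl n)) _ _
          fun ψ => rfl).symm
    _ = ∑ ψ : m ↪ n, (A.submatrix id ψ).det * (B.submatrix ψ id).det := by
        rw [Finset.sum_comm]
        simp only [det_submatrix_mul_det_submatrix]

theorem det_fromBlocks_one₂₂_mul_det [Fintype p] [DecidableEq p] (A : Matrix m m R)
    (B : Matrix m p R) (C : Matrix p m R) (h : C * Aᵀ + Bᵀ = 0) :
    (fromBlocks A B C 1).det * A.det = (A * Aᵀ + B * Bᵀ).det := by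
  have hmul :
      fromBlocks A B C 1 * fromBlocks Aᵀ 0 Bᵀ 1 = fromBlocks (A * Aᵀ + B * Bᵀ) B 0 1 := by
    rw [fromBlocks_multiply, Matrix.one_mul, h]
    simp
  calc (fromBlocks A B C 1).det * A.det
      = (fromBlocks A B C 1).det * (fromBlocks Aᵀ 0 Bᵀ 1).det := by
        rw [det_fromBlocks_zero₁₂, det_one, mul_one, det_transpose]
    _ = (A * Aᵀ + B * Bᵀ).det := by
        rw [← det_mul, hmul, det_fromBlocks_zero₂₁, det_one, mul_one]

theorem det_submatrix_fromRows_mul_det [Fintype p] [DecidableEq p] {E : Type*} [Fintype E]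
    (X : Matrix m E R) (Y : Matrix p E R) (c : m ⊕ p ≃ E)
    (hY : ∀ i j, Y i (c (Sum.inr j)) = (1 : Matrix p p R) i j) (hXY : Y * Xᵀ = 0) :
    ((fromRows X Y).submatrix id c).det * (X.submatrix id (c ∘ Sum.inl)).det = (X * Xᵀ).det := by
  set A := X.submatrix id (c ∘ Sum.inl)
  set B := X.submatrix id (c ∘ Sum.inr)
  set C := Y.submatrix id (c ∘ Sum.inl)
  have hX : X.submatrix id c = fromCols A B := by ext i (j | j) <;> rfl
  have hY' : Y.submatrix id c = fromCols C 1 := by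
    ext i (j | j)
    · rfl
    · exact hY i j
  have hXX : X * Xᵀ = A * Aᵀ + B * Bᵀ := by
    rw [← submatrix_id_id (X * Xᵀ), ← submatrix_mul_equiv X Xᵀ id c id, ← transpose_submatrix,
      hX, transpose_fromCols, fromCols_mul_fromRows]
  have hYX : C * Aᵀ + Bᵀ = 0 := by
    rw [← hXY, ← submatrix_id_id (Y * Xᵀ), ← submatrix_mul_equiv Y Xᵀ id c id,
      ← transpose_submatrix, hX, hY', transpose_fromCols, fromCols_mul_fromRows, Matrix.one_mul]
  have hblocks : (fromRows X Y).submatrix id c = fromBlocks A B C 1 := by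
    rw [← fromRows_fromCols_eq_fromBlocks, ← hX, ← hY']
    ext (i | i) j <;> rfl
  rw [hblocks, hXX]
  exact det_fromBlocks_one₂₂_mul_det A B C hYX

end Matrix

theorem Function.Embedding.card_range_eq_factorial {α β : Type*} [Finite α] (s : Set β) [Finite s]
    (h : Nat.card s = Nat.card α) :
    Nat.card {f : α ↪ β // Set.range f = s} = (Nat.card α).factorial := by
  obtain ⟨e₀⟩ := Finite.card_eq.mp h.symm
  let E : {f : α ↪ β // Set.range f = s} ≃ (α ≃ s) :=
    { toFun f := (Equiv.ofInjective f.1 f.1.injective).trans (Equiv.setCongr f.2)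
      invFun e := ⟨e.toEmbedding.trans (Function.Embedding.subtype _), by
        change Set.range (Subtype.val ∘ e) = s
        rw [Set.range_comp, EquivLike.range_eq_univ, Set.image_univ, Subtype.range_coe]⟩
      left_inv f := rfl
      right_inv e := by ext; rfl }
  rw [Nat.card_congr (E.trans (Equiv.equivCongr (Equiv.refl α) e₀.symm)), Nat.card_perm]

open Matrix

namespace SimpleGraph

theorem Walk.mk_mem_edges_of_mem_map_toProd {V : Type*} {F : SimpleGraph V} {a b x y : V}
    {P : F.Walk a b} (h : (x, y) ∈ P.darts.map Dart.toProd) : s(x, y) ∈ P.edges := by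
  obtain ⟨d, hd, hdxy⟩ := List.mem_map.mp h
  have hedge := List.mem_map_of_mem (f := Dart.edge) hd
  rwa [Dart.edge, hdxy] at hedge

variable {V : Type*} [LinearOrder V] {G F : SimpleGraph V}

theorem exists_orientedEdge_of_adj {u v : V} (h : G.Adj u v) :
    ∃ g : OrientedEdge G, g.1 = (u, v) ∨ g.1 = (v, u) := by
  rcases h.ne.lt_or_gt with huv | hvu
  · exact ⟨⟨(u, v), huv, h⟩, .inl rfl⟩
  · exact ⟨⟨(v, u), hvu, h.symm⟩, .inr rfl⟩

theorem orientedEdge_eq_of_mk_eq {g g' : OrientedEdge G}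
    (h : s(g.1.1, g.1.2) = s(g'.1.1, g'.1.2)) : g = g' := by
  rcases Sym2.eq_iff.mp h with ⟨h1, h2⟩ | ⟨h1, h2⟩
  · exact Subtype.ext (Prod.ext h1 h2)
  · exact absurd (h1 ▸ h2 ▸ g.2.1) (lt_asymm g'.2.1)

theorem mk_eq_of_orientation {g : OrientedEdge G} {u v : V} (hg : g.1 = (u, v) ∨ g.1 = (v, u)) :
    s(g.1.1, g.1.2) = s(u, v) := by
  rcases hg with hg | hg <;> simp [hg, Sym2.eq_swap]

def edgeGraph (s : Set (OrientedEdge G)) : SimpleGraph V :=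
  fromEdgeSet ((fun g : OrientedEdge G => s(g.1.1, g.1.2)) '' s)

theorem edgeGraph_le (s : Set (OrientedEdge G)) : edgeGraph s ≤ G :=
  (fromEdgeSet_le G).mpr fun _ ⟨⟨g, _, hg⟩, _⟩ => hg ▸ g.2.2

theorem edgeGraph_adj_iff {s : Set (OrientedEdge G)} {g : OrientedEdge G} {u v : V}
    (hg : g.1 = (u, v) ∨ g.1 = (v, u)) : (edgeGraph s).Adj u v ↔ g ∈ s := by
  rw [edgeGraph, fromEdgeSet_adj, ← mk_eq_of_orientation hg]
  constructor
  · rintro ⟨⟨g', hg', hg'g⟩, -⟩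
    rwa [← orientedEdge_eq_of_mk_eq hg'g]
  · have hne : u ≠ v := by
      have := g.2.1.ne
      rcases hg with hg | hg <;> rw [hg] at this
      exacts [this, this.symm]
    exact fun hgs => ⟨⟨g, hgs, rfl⟩, hne⟩

theorem edgeGraph_adj (s : Set (OrientedEdge G)) (g : OrientedEdge G) :
    (edgeGraph s).Adj g.1.1 g.1.2 ↔ g ∈ s :=
  edgeGraph_adj_iff (.inl rfl)

theorem edgeGraph_setOf_adj {H : SimpleGraph V} (hHG : H ≤ G) :
    edgeGraph {g : OrientedEdge G | H.Adj g.1.1 g.1.2} = H := by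
  ext u v
  by_cases huv : G.Adj u v
  · obtain ⟨g, hg⟩ := exists_orientedEdge_of_adj huv
    rw [edgeGraph_adj_iff hg, Set.mem_ofPred_eq]
    rcases hg with hg | hg <;> simp [hg, H.adj_comm]
  · exact iff_of_false (fun h => huv (edgeGraph_le _ h)) fun h => huv (hHG h)

noncomputable def orientedEdgeEquivEdgeSet {H : SimpleGraph V} (hHG : H ≤ G) :
    {g : OrientedEdge G // H.Adj g.1.1 g.1.2} ≃ H.edgeSet :=
  Equiv.ofBijective (fun g => ⟨s(g.1.1.1, g.1.1.2), g.2⟩) ⟨fun g g' h =>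
    Subtype.ext (orientedEdge_eq_of_mk_eq (congrArg Subtype.val h)), by
      rintro ⟨e, he⟩
      induction e using Sym2.ind with
      | _ u v =>
      obtain ⟨g, hg⟩ := exists_orientedEdge_of_adj (hHG he)
      have hmk := mk_eq_of_orientation hg
      exact ⟨⟨g, by rw [← mem_edgeSet, hmk]; exact he⟩, Subtype.ext hmk⟩⟩

theorem card_orientedEdges_of_isTree [Fintype V] {H : SimpleGraph V} (hHG : H ≤ G) (hH : H.IsTree) :
    Nat.card {g : OrientedEdge G // H.Adj g.1.1 g.1.2} = Fintype.card V - 1 := by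
  classical
  rw [Nat.card_congr (orientedEdgeEquivEdgeSet hHG), Nat.card_eq_fintype_card,
    ← edgeFinset_card, ← hH.card_edgeFinset, Nat.add_sub_cancel]

theorem exists_equiv_sum_compl_of_isTree [Fintype V] {T : SimpleGraph V}
    (hTG : T ≤ G) (hT : T.IsTree) (S : V) :
    ∃ c : {w : V // w ≠ S} ⊕ {g : OrientedEdge G // ¬ T.Adj g.1.1 g.1.2} ≃ OrientedEdge G,
      (∀ f, c (Sum.inr f) = f.1) ∧ Set.range (c ∘ Sum.inl) = {g | T.Adj g.1.1 g.1.2} := by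
  classical
  obtain ⟨ι⟩ : Nonempty ({g : OrientedEdge G // T.Adj g.1.1 g.1.2} ≃ {w : V // w ≠ S}) := by
    rw [← Finite.card_eq, card_orientedEdges_of_isTree hTG hT]
    simp
  refine ⟨(Equiv.sumCongr ι.symm (Equiv.refl _)).trans (Equiv.sumCompl _), fun f => rfl, ?_⟩
  ext g
  constructor
  · rintro ⟨w, rfl⟩
    exact (ι.symm w).2
  · exact fun hg => ⟨ι ⟨g, hg⟩, by simp⟩

def subgraphEquivSetOrientedEdge : {H : SimpleGraph V // H ≤ G} ≃ Set (OrientedEdge G) where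
  toFun H := {g | H.1.Adj g.1.1 g.1.2}
  invFun s := ⟨edgeGraph s, edgeGraph_le s⟩
  left_inv H := Subtype.ext (edgeGraph_setOf_adj H.2)
  right_inv s := Set.ext (edgeGraph_adj s)

section Incidence

variable (R : Type*) [Ring R]

def signedIncMatrix (G : SimpleGraph V) : Matrix V (OrientedEdge G) R :=
  fun w g => if g.1.2 = w then 1 else if g.1.1 = w then -1 else 0

def Walk.signedIndicator {a b : V} (P : F.Walk a b) (g : OrientedEdge G) : R :=
  if (g.1.1, g.1.2) ∈ P.darts.map Dart.toProd then 1
  else if (g.1.2, g.1.1) ∈ P.darts.map Dart.toProd then -1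
  else 0

def reducedSignedIncMatrix (G : SimpleGraph V) (S : V) :
    Matrix {w : V // w ≠ S} (OrientedEdge G) R :=
  (signedIncMatrix R G).submatrix (↑) id

theorem signedIncMatrix_apply (w : V) (g : OrientedEdge G) :
    signedIncMatrix R G w g = (Pi.single g.1.2 1 - Pi.single g.1.1 1 : V → R) w := by
  have hne : g.1.1 ≠ g.1.2 := g.2.1.ne
  simp only [signedIncMatrix]
  split_ifs <;> simp_all

theorem map_reducedSignedIncMatrix {S : V} :
    (reducedSignedIncMatrix ℤ G S).map (Int.cast : ℤ → R) = reducedSignedIncMatrix R G S := by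
  ext w g
  simp only [reducedSignedIncMatrix, signedIncMatrix, Matrix.map_apply, Matrix.submatrix_apply, id]
  split_ifs <;> simp

namespace Walk

variable {R}

theorem signedIndicator_eq_zero {a b : V} (P : F.Walk a b) {g : OrientedEdge G}
    (hg : s(g.1.1, g.1.2) ∉ P.edges) : P.signedIndicator R g = 0 := by
  rw [signedIndicator, if_neg fun h => hg (mk_mem_edges_of_mem_map_toProd h),
    if_neg fun h => hg (Sym2.eq_swap ▸ mk_mem_edges_of_mem_map_toProd h)]

theorem signedIndicator_eq_zero_of_not_adj {a b : V} (P : F.Walk a b) {g : OrientedEdge G}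
    (hg : ¬ F.Adj g.1.1 g.1.2) : P.signedIndicator R g = 0 :=
  P.signedIndicator_eq_zero fun h => hg (P.adj_of_mem_edges h)

theorem signedIndicator_ne_zero [Nontrivial R] {a b : V} (P : F.Walk a b) {d : F.Dart}
    (hd : d ∈ P.darts) {g : OrientedEdge G} (hg : g.1 = d.toProd ∨ g.1 = d.toProd.swap) :
    P.signedIndicator R g ≠ 0 := by
  have hd' := List.mem_map_of_mem (f := Dart.toProd) hd
  unfold signedIndicator
  split_ifs with h1 h2
  · exact one_ne_zero
  · exact neg_ne_zero.mpr one_ne_zero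
  · rcases hg with hg | hg
    · exact absurd (hg ▸ hd') h1
    · rw [← Prod.swap_swap d.toProd, ← hg] at hd'
      exact absurd hd' h2

@[simp]
theorem signedIndicator_nil {u : V} :
    ((nil : F.Walk u u).signedIndicator R : OrientedEdge G → R) = 0 := by
  ext g
  simp [signedIndicator]

theorem signedIndicator_cons {a c b : V} (h : F.Adj a c) (p : F.Walk c b)
    (hp : s(a, c) ∉ p.edges) :
    ((cons h p).signedIndicator R : OrientedEdge G → R) =
      (cons h nil).signedIndicator R + p.signedIndicator R := by
  ext g
  have hL : ∀ {x y : V}, s(x, y) = s(a, c) → (x, y) ∉ p.darts.map Dart.toProd :=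
    fun hxy hmem => hp (hxy ▸ mk_mem_edges_of_mem_map_toProd hmem)
  simp only [Pi.add_apply, signedIndicator, darts_cons, darts_nil, List.map_cons, List.map_nil,
    List.mem_cons, List.not_mem_nil, or_false]
  by_cases hg : s(g.1.1, g.1.2) = s(a, c)
  · have h1 := hL hg
    have h2 := hL (Sym2.eq_swap.trans hg)
    obtain ⟨e1, e2⟩ | ⟨e1, e2⟩ := Sym2.eq_iff.mp hg <;> rw [e1, e2] at h1 h2 <;>
      simp [h1, h2, e1, e2, h.ne, h.ne.symm]
  · have ne1 : (g.1.1, g.1.2) ≠ (a, c) := by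
      rintro ⟨⟩
      exact hg rfl
    have ne2 : (g.1.2, g.1.1) ≠ (a, c) := by
      rintro ⟨⟩
      exact hg Sym2.eq_swap
    simp [ne1, ne2]

end Walk

theorem vecMul_signedIncMatrix [Fintype V] (y : V → R) :
    y ᵥ* signedIncMatrix R G = fun g => y g.1.2 - y g.1.1 := by
  ext g
  simp [Matrix.vecMul, dotProduct, signedIncMatrix_apply, mul_sub, Finset.sum_sub_distrib,
    Pi.single_apply]

theorem vecMul_reducedSignedIncMatrix [Fintype V] {S : V} {y : V → R} (hy : y S = 0) :
    (y ∘ (↑)) ᵥ* reducedSignedIncMatrix R G S = fun g => y g.1.2 - y g.1.1 := by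
  rw [← vecMul_signedIncMatrix, reducedSignedIncMatrix]
  ext g
  refine Fintype.sum_of_injective _ Subtype.val_injective _ _ (fun v hv => ?_) fun _ => rfl
  rw [show v = S by simpa using hv, hy, zero_mul]

variable [Fintype V] [DecidableRel G.Adj]

theorem signedIncMatrix_mulVec_single (g : OrientedEdge G) :
    signedIncMatrix R G *ᵥ Pi.single g 1 = Pi.single g.1.2 1 - Pi.single g.1.1 1 := by
  ext w
  simp [Matrix.mulVec_single, signedIncMatrix_apply]

theorem signedIncMatrix_mulVec_signedIndicator_cons_nil (hF : F ≤ G) {a c : V} (h : F.Adj a c) :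
    signedIncMatrix R G *ᵥ (Walk.cons h Walk.nil).signedIndicator R =
      Pi.single c 1 - Pi.single a 1 := by
  rcases h.ne.lt_or_gt with hac | hca
  · have hsingle : (Walk.cons h Walk.nil).signedIndicator R =
        Pi.single (⟨(a, c), hac, hF h⟩ : OrientedEdge G) (1 : R) := by
      ext g
      have hrev : ¬ (g.1.2 = a ∧ g.1.1 = c) := fun ⟨h1, h2⟩ => lt_asymm hac (h1 ▸ h2 ▸ g.2.1)
      simp [Walk.signedIndicator, Pi.single_apply, Subtype.ext_iff, Prod.ext_iff, hrev]
    rw [hsingle, signedIncMatrix_mulVec_single]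
  · have hsingle : (Walk.cons h Walk.nil).signedIndicator R =
        -Pi.single (⟨(c, a), hca, hF h.symm⟩ : OrientedEdge G) (1 : R) := by
      ext g
      have hfwd : ¬ (g.1.1 = a ∧ g.1.2 = c) := fun ⟨h1, h2⟩ => lt_asymm hca (h1 ▸ h2 ▸ g.2.1)
      simp [Walk.signedIndicator, Pi.single_apply, Subtype.ext_iff, Prod.ext_iff, hfwd,
        and_comm, apply_ite (fun x : R => -x)]
    rw [hsingle, Matrix.mulVec_neg, signedIncMatrix_mulVec_single, neg_sub]

theorem signedIncMatrix_mulVec_signedIndicator (hF : F ≤ G) {a b : V} {P : F.Walk a b}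
    (hP : P.IsTrail) :
    signedIncMatrix R G *ᵥ P.signedIndicator R = Pi.single b 1 - Pi.single a 1 := by
  induction P with
  | nil => simp
  | cons h p ih =>
    rw [Walk.isTrail_cons] at hP
    rw [Walk.signedIndicator_cons h p hP.2, Matrix.mulVec_add,
      signedIncMatrix_mulVec_signedIndicator_cons_nil R hF h, ih hP.1]
    abel

theorem reducedSignedIncMatrix_mulVec {S : V} (x : OrientedEdge G → R) (w : {w : V // w ≠ S}) :
    (reducedSignedIncMatrix R G S *ᵥ x) w = (signedIncMatrix R G *ᵥ x) w :=
  rfl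

end Incidence

variable [Fintype V] {R : Type*} {S : V} {H : SimpleGraph V}
  {φ : {w : V // w ≠ S} → OrientedEdge G}

theorem det_reducedSignedIncMatrix_submatrix_eq_zero_of_not_connected [CommRing R] [IsDomain R]
    (hH : ¬ H.Connected) (hrange : Set.range φ ⊆ {g | H.Adj g.1.1 g.1.2}) :
    ((reducedSignedIncMatrix R G S).submatrix id φ).det = 0 := by
  classical
  obtain ⟨v, hv⟩ : ∃ v, ¬ H.Reachable S v := by
    by_contra! hS
    have : Nonempty V := ⟨S⟩
    exact hH ⟨fun u v => (hS u).symm.trans (hS v)⟩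
  have hvS : v ≠ S := by
    rintro rfl
    exact hv (Reachable.refl v)
  let y : V → R := fun u => if H.Reachable S u then 0 else 1
  rw [← Matrix.exists_vecMul_eq_zero_iff]
  refine ⟨y ∘ (↑), fun h0 => by simpa [y, hv] using congrFun h0 ⟨v, hvS⟩, ?_⟩
  ext j
  have hadj : H.Adj (φ j).1.1 (φ j).1.2 := hrange ⟨j, rfl⟩
  have hreach : H.Reachable S (φ j).1.2 ↔ H.Reachable S (φ j).1.1 :=
    ⟨fun h => h.trans hadj.symm.reachable, fun h => h.trans hadj.reachable⟩
  show (y ∘ (↑) ᵥ* reducedSignedIncMatrix R G S) (φ j) = 0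
  rw [vecMul_reducedSignedIncMatrix R (by simp [y])]
  simp [y, hreach]

variable [DecidableRel G.Adj]

theorem reducedSignedIncMatrix_submatrix_mul_eq_one [CommRing R] (hHG : H ≤ G) (hH : H.Connected)
    (hφ : Function.Injective φ) (hrange : Set.range φ = {g | H.Adj g.1.1 g.1.2}) :
    ∃ Q, (reducedSignedIncMatrix R G S).submatrix id φ * Q = 1 := by
  let P : ∀ w : V, H.Path S w := fun w => (hH.preconnected S w).some.toPath
  refine ⟨Matrix.of fun j w => (P w).1.signedIndicator R (φ j), ?_⟩
  ext w w'
  have hsupp : ∀ g ∉ Set.range φ, (P w').1.signedIndicator R g = 0 := fun g hg =>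
    Walk.signedIndicator_eq_zero_of_not_adj _ (by rwa [hrange] at hg)
  have hcol := congrFun (Matrix.submatrix_mulVec_comp (reducedSignedIncMatrix R G S) hφ hsupp) w
  rw [reducedSignedIncMatrix_mulVec, signedIncMatrix_mulVec_signedIndicator R hHG (P w').2.isTrail]
    at hcol
  refine (show _ = _ from hcol).trans ?_
  simp [Matrix.one_apply, Pi.single_apply, w.2, Subtype.ext_iff]

theorem det_reducedSignedIncMatrix_submatrix_eq_one_or_neg_one [CommRing R] (hHG : H ≤ G)
    (hH : H.Connected) (hφ : Function.Injective φ)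
    (hrange : Set.range φ = {g | H.Adj g.1.1 g.1.2}) :
    ((reducedSignedIncMatrix R G S).submatrix id φ).det = 1 ∨
      ((reducedSignedIncMatrix R G S).submatrix id φ).det = -1 := by
  obtain ⟨Q, hQ⟩ := reducedSignedIncMatrix_submatrix_mul_eq_one (R := ℤ) hHG hH hφ hrange
  have hdet : ((reducedSignedIncMatrix ℤ G S).submatrix id φ).det * Q.det = 1 := by
    rw [← Matrix.det_mul, hQ, Matrix.det_one]
  rw [← map_reducedSignedIncMatrix, Matrix.submatrix_map, ← Int.cast_det]
  rcases Int.eq_one_or_neg_one_of_mul_eq_one hdet with h | h <;> simp [h]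

theorem det_reducedSignedIncMatrix_submatrix_eq_zero_of_not_isAcyclic [CommRing R] [IsDomain R]
    (hHG : H ≤ G) (hH : ¬ H.IsAcyclic) (hφ : Function.Injective φ)
    (hrange : Set.range φ = {g | H.Adj g.1.1 g.1.2}) :
    ((reducedSignedIncMatrix R G S).submatrix id φ).det = 0 := by
  obtain ⟨v, c, hc⟩ : ∃ v, ∃ c : H.Walk v v, c.IsCycle := by simpa [IsAcyclic] using hH
  have hsupp : ∀ g ∉ Set.range φ, c.signedIndicator R g = 0 := fun g hg =>
    Walk.signedIndicator_eq_zero_of_not_adj _ (by rwa [hrange] at hg)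
  rw [← Matrix.exists_mulVec_eq_zero_iff]
  refine ⟨c.signedIndicator R ∘ φ, ?_, ?_⟩
  · obtain ⟨d, hd⟩ : ∃ d, d ∈ c.darts :=
      List.exists_mem_of_ne_nil _ (mt Walk.darts_eq_nil.mp hc.not_nil)
    obtain ⟨g, hg⟩ := exists_orientedEdge_of_adj (hHG d.adj)
    obtain ⟨j, rfl⟩ : g ∈ Set.range φ := by
      rw [hrange]
      rcases hg with hg | hg <;> simp only [Set.mem_ofPred_eq, hg]
      exacts [d.adj, d.adj.symm]
    exact fun h0 => c.signedIndicator_ne_zero hd hg (congrFun h0 j)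
  · rw [Matrix.submatrix_mulVec_comp _ hφ hsupp]
    ext w
    rw [reducedSignedIncMatrix_mulVec, signedIncMatrix_mulVec_signedIndicator R hHG hc.isTrail]
    simp

theorem card_embedding_edgeGraph_isTree (S : V) :
    Nat.card {ψ : {w : V // w ≠ S} ↪ OrientedEdge G // (edgeGraph (Set.range ψ)).IsTree} =
      (Fintype.card V - 1).factorial * Nat.card {H : SimpleGraph V // H ≤ G ∧ H.IsTree} := by
  classical
  let q : Set (OrientedEdge G) → Prop := fun s => (edgeGraph s).IsTree
  have hfiber : ∀ s : Subtype q,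
      Nat.card {ψ : {w : V // w ≠ S} ↪ OrientedEdge G // Set.range ⇑ψ = s.1} =
        (Fintype.card V - 1).factorial := by
    intro ⟨s, hs⟩
    have hcard : Nat.card s = Nat.card {w : V // w ≠ S} := by
      calc Nat.card s = Nat.card {g : OrientedEdge G // (edgeGraph s).Adj g.1.1 g.1.2} :=
            Nat.card_congr (Equiv.subtypeEquivRight fun g => (edgeGraph_adj s g).symm)
        _ = Nat.card {w : V // w ≠ S} := by
            rw [card_orientedEdges_of_isTree (edgeGraph_le s) hs]
            simp
    rw [Function.Embedding.card_range_eq_factorial s hcard]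
    simp
  have htrees : Nat.card (Subtype q) = Nat.card {H : SimpleGraph V // H ≤ G ∧ H.IsTree} :=
    Nat.card_congr ((subgraphEquivSetOrientedEdge.symm.subtypeEquiv fun s => Iff.rfl).trans
      (Equiv.subtypeSubtypeEquivSubtypeInter _ _))
  calc Nat.card {ψ : {w : V // w ≠ S} ↪ OrientedEdge G // q (Set.range ψ)}
      = Nat.card (Σ s : Subtype q, {ψ : {w : V // w ≠ S} ↪ OrientedEdge G // Set.range ψ = s.1}) :=
        Nat.card_congr (Equiv.sigmaSubtypeFiberEquivSubtype
          (fun ψ : {w : V // w ≠ S} ↪ OrientedEdge G => Set.range ⇑ψ)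
          fun _ => Iff.rfl).symm
    _ = ∑ _s : Subtype q, (Fintype.card V - 1).factorial := by
        rw [Nat.card_sigma]
        exact Finset.sum_congr rfl fun s _ => hfiber s
    _ = _ := by
        rw [Finset.sum_const, Finset.card_univ, smul_eq_mul, mul_comm,
          ← Nat.card_eq_fintype_card (α := Subtype q), htrees]

theorem det_reducedSignedIncMatrix_mul_transpose [CommRing R] [IsDomain R] [CharZero R] (S : V) :
    (reducedSignedIncMatrix R G S * (reducedSignedIncMatrix R G S)ᵀ).det =
      Nat.card {H : SimpleGraph V // H ≤ G ∧ H.IsTree} := by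
  classical
  set B := reducedSignedIncMatrix R G S
  have hterm : ∀ ψ : {w : V // w ≠ S} ↪ OrientedEdge G,
      (B.submatrix id ψ).det * (Bᵀ.submatrix ψ id).det =
        if (edgeGraph (Set.range ψ)).IsTree then 1 else 0 := by
    intro ψ
    have hrange : Set.range ψ = {g | (edgeGraph (Set.range ψ)).Adj g.1.1 g.1.2} :=
      Set.ext fun g => (edgeGraph_adj _ g).symm
    rw [← Matrix.transpose_submatrix, Matrix.det_transpose]
    split_ifs with htree
    · rcases det_reducedSignedIncMatrix_submatrix_eq_one_or_neg_one (R := R) (edgeGraph_le _)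
        htree.connected ψ.injective hrange with h | h <;> simp [B, h]
    · rw [isTree_iff, not_and_or] at htree
      rcases htree with h | h
      · rw [det_reducedSignedIncMatrix_submatrix_eq_zero_of_not_connected h hrange.subset,
          zero_mul]
      · rw [det_reducedSignedIncMatrix_submatrix_eq_zero_of_not_isAcyclic (edgeGraph_le _) h
          ψ.injective hrange, zero_mul]
  have hW : Fintype.card {w : V // w ≠ S} = Fintype.card V - 1 := by simp
  have hCB := Matrix.factorial_card_mul_det_mul B Bᵀ
  rw [Finset.sum_congr rfl fun ψ _ => hterm ψ, Finset.sum_boole, ← Fintype.card_subtype, hW,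
    ← Nat.card_eq_fintype_card (α := Subtype _), card_embedding_edgeGraph_isTree,
    Nat.cast_mul] at hCB
  exact mul_left_cancel₀ (Nat.cast_ne_zero.mpr (Nat.factorial_ne_zero _)) hCB

end SimpleGraph

open SimpleGraph

namespace IsEdgewiseKirchhoffMatrix

variable {V : Type*} [LinearOrder V] {G T : SimpleGraph V} {S : V}
  {M : Matrix (KirchhoffRow G T S) (OrientedEdge G) ℚ}

theorem toRows₁_eq (hM : IsEdgewiseKirchhoffMatrix G T S M) :
    M.toRows₁ = reducedSignedIncMatrix ℚ G S := by
  ext w g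
  exact hM.1 w g

theorem exists_row_eq (hM : IsEdgewiseKirchhoffMatrix G T S M) (hT : T.Connected)
    (f : {g : OrientedEdge G // ¬ T.Adj g.1.1 g.1.2}) :
    ∃ P : T.Walk f.1.1.2 f.1.1.1,
      P.IsPath ∧ M (Sum.inr f) = Pi.single f.1 1 + P.signedIndicator ℚ := by
  let P := (hT.preconnected f.1.1.2 f.1.1.1).some.toPath
  refine ⟨P.1, P.2, funext fun g => ?_⟩
  rw [hM.2 f g P.1 P.2, Pi.add_apply, Pi.single_apply]
  by_cases hg : g = f.1
  · rw [if_pos hg, if_pos hg, hg, Walk.signedIndicator_eq_zero_of_not_adj _ f.2, add_zero]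
  · rw [if_neg hg, if_neg hg, zero_add, Walk.signedIndicator]

theorem apply_inr_val (hM : IsEdgewiseKirchhoffMatrix G T S M) (hT : T.Connected)
    (f f' : {g : OrientedEdge G // ¬ T.Adj g.1.1 g.1.2}) :
    M (Sum.inr f) f'.1 = (1 : Matrix _ _ ℚ) f f' := by
  obtain ⟨P, -, hP⟩ := hM.exists_row_eq hT f
  rw [hP, Pi.add_apply, Walk.signedIndicator_eq_zero_of_not_adj _ f'.2, add_zero, one_apply]
  simp [Pi.single_apply, Subtype.ext_iff, eq_comm]

theorem toRows₂_mul_transpose [Fintype V] [DecidableRel G.Adj]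
    (hM : IsEdgewiseKirchhoffMatrix G T S M) (hTG : T ≤ G) (hT : T.Connected) : M.toRows₂ * (reducedSignedIncMatrix ℚ G S)ᵀ = 0 := by
  ext f w
  obtain ⟨P, hP, hrow⟩ := hM.exists_row_eq hT f
  have hcycle : reducedSignedIncMatrix ℚ G S *ᵥ M (Sum.inr f) = 0 := by
    ext w
    rw [hrow, mulVec_add, Pi.add_apply, reducedSignedIncMatrix_mulVec,
      reducedSignedIncMatrix_mulVec, signedIncMatrix_mulVec_single, signedIncMatrix_mulVec_signedIndicator ℚ hTG hP.isTrail]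
    simp
  rw [mul_apply, Matrix.zero_apply]
  exact (Finset.sum_congr rfl fun g _ => mul_comm _ _).trans (congrFun hcycle w)

end IsEdgewiseKirchhoffMatrix

theorem abs_det_edgewiseKirchhoff_eq_card_spanning_trees_general
    {V : Type*} [Fintype V] [LinearOrder V]
    (G T : SimpleGraph V) [DecidableRel G.Adj] (S : V)
    (hTsub : T ≤ G) (hTtree : T.IsTree)
    (M : Matrix (KirchhoffRow G T S) (OrientedEdge G) ℚ)
    (hM : IsEdgewiseKirchhoffMatrix G T S M)
    (e : KirchhoffRow G T S ≃ OrientedEdge G) :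
    |(M.submatrix e.symm id).det| =
      (Nat.card {H : SimpleGraph V // H ≤ G ∧ H.IsTree} : ℚ) := by
  classical
  obtain ⟨c, hc_inr, hc_range⟩ := exists_equiv_sum_compl_of_isTree hTsub hTtree S
  have hdet := det_submatrix_fromRows_mul_det _ _ c
    (fun f f' => by rw [hc_inr]; exact hM.apply_inr_val hTtree.connected f f')
    (hM.toRows₂_mul_transpose hTsub hTtree.connected)
  rw [← hM.toRows₁_eq, fromRows_toRows, hM.toRows₁_eq, det_reducedSignedIncMatrix_mul_transpose]
    at hdet
  have hreindex : M.submatrix e.symm id = (M.submatrix id c).submatrix e.symm c.symm := by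
    ext i j
    simp
  have hunit : |((reducedSignedIncMatrix ℚ G S).submatrix id (c ∘ Sum.inl)).det| = 1 := by
    rcases det_reducedSignedIncMatrix_submatrix_eq_one_or_neg_one (R := ℚ) hTsub hTtree.connected
      (c.injective.comp Sum.inl_injective) hc_range with h | h <;> simp [h]
  rw [hreindex, abs_det_submatrix_equiv_equiv, ← mul_one |_|, ← hunit, ← abs_mul, hdet,
    Nat.abs_cast]

/-- **Edgewise Kirchhoff matrix tree theorem.**
For a finite connected simple graph `G` with at least two vertices, a pole `S` and a
spanning tree `T`, the absolute value of the determinant of the edgewise Kirchhoff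
matrix `M_{G,S,T}` equals the number of spanning trees of `G`. -/
theorem abs_det_edgewiseKirchhoff_eq_card_spanning_trees
    {V : Type*} [Fintype V] [LinearOrder V]
    (G T : SimpleGraph V) [DecidableRel G.Adj] (S : V)
    (hm : 2 ≤ Fintype.card V) (hG : G.Connected)
    (hTsub : T ≤ G) (hTtree : T.IsTree)
    (M : Matrix (KirchhoffRow G T S) (OrientedEdge G) ℚ)
    (hM : IsEdgewiseKirchhoffMatrix G T S M)
    (e : KirchhoffRow G T S ≃ OrientedEdge G) :
    |(M.submatrix e.symm id).det| =
      (Nat.card {H : SimpleGraph V // H ≤ G ∧ H.IsTree} : ℚ) :=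
  abs_det_edgewiseKirchhoff_eq_card_spanning_trees_general G T S hTsub hTtree M hM e
end

section
/- Let G be a finite connected simple graph with m ≥ 2 vertices and n edges. Then the absolute value of the determinant of the edgewise Kirchhoff matrix does not depend on the choice of pole or spanning tree: for any vertices S, S' of G and any spanning trees T, T' of G, |det M_{G,S,T}| = |det M_{G,S',T'}|. -/
open SimpleGraph

/-!
The rows of `M_{G,S,T}` generate over `ℤ` the lattice spanned by all vertex incidence vectors and
all integer-valued cycles. The vertex rows are the incidence vectors of the vertices `w ≠ S`, and
that of `S` is minus their sum. The row of `f ∉ T` is the fundamental cycle `C_f` of `f`, and every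
cycle `z` equals `∑_{f ∉ T} z(f) • C_f`: the difference is a cycle supported on the forest `T`,
hence zero. As this lattice does not depend on `S` or `T`, each of `M_{G,S,T}` and `M_{G,S',T'}`
is an integer matrix times the other, so their determinants differ by a unit of `ℤ`.
-/

open Matrix

theorem OrientedEdge.eq_of_sym2_eq {V : Type*} [LinearOrder V] {G : SimpleGraph V}
    {g g' : OrientedEdge G}
    (h : s(g.1.1, g.1.2) = s(g'.1.1, g'.1.2)) : g = g' := by
  rcases Sym2.eq_iff.mp h with ⟨h1, h2⟩ | ⟨h1, h2⟩
  · exact Subtype.ext (Prod.ext h1 h2)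
  · have h := g'.2.1
    rw [← h1, ← h2] at h
    exact absurd g.2.1 (lt_asymm h)

namespace SimpleGraph

variable {V : Type*} [LinearOrder V] (R : Type*) [Ring R] (G : SimpleGraph V)

def orientedIncMatrix : Matrix V (OrientedEdge G) R :=
  fun w g => if g.1.2 = w then 1 else if g.1.1 = w then -1 else 0

def dartVector (p : V × V) : OrientedEdge G → R :=
  fun g => (if p = g.1 then 1 else 0) - (if p = g.1.swap then 1 else 0)

def walkVector {H : SimpleGraph V} {a b : V} (P : H.Walk a b) : OrientedEdge G → R :=
  fun g => ((P.darts.map Dart.toProd).count g.1 : R) - (P.darts.map Dart.toProd).count g.1.swap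

variable {R G}

theorem orientedIncMatrix_col (g : OrientedEdge G) :
    (orientedIncMatrix R G).col g = Pi.single g.1.2 1 - Pi.single g.1.1 1 := by
  have hne : g.1.1 ≠ g.1.2 := g.2.1.ne
  ext w
  simp only [col_apply, orientedIncMatrix, Pi.sub_apply, Pi.single_apply]
  split_ifs <;> subst_vars <;> simp_all

theorem dartVector_swap (p : V × V) : dartVector R G p.swap = -dartVector R G p := by
  ext g
  simp only [dartVector, Pi.neg_apply, Prod.swap_eq_iff_eq_swap, eq_comm (a := p), Prod.swap_swap]
  abel

section Walk

variable {H : SimpleGraph V}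

@[simp]
theorem walkVector_nil {a : V} : walkVector R G (Walk.nil : H.Walk a a) = 0 := by
  ext g
  simp [walkVector]

theorem walkVector_cons {a c b : V} (h : H.Adj a c) (P : H.Walk c b) :
    walkVector R G (Walk.cons h P) = dartVector R G (a, c) + walkVector R G P := by
  ext g
  simp only [walkVector, dartVector, Walk.darts_cons, List.map_cons, List.count_cons,
    beq_iff_eq, Pi.add_apply, Nat.cast_add, Nat.cast_ite, Nat.cast_one, Nat.cast_zero]
  abel

theorem walkVector_apply_of_not_adj {a b : V} (P : H.Walk a b) {g : OrientedEdge G}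
    (hg : ¬ H.Adj g.1.1 g.1.2) : walkVector R G P g = 0 := by
  have hmem : ∀ p : V × V, (H.Adj p.1 p.2 ↔ H.Adj g.1.1 g.1.2) →
      (P.darts.map Dart.toProd).count p = 0 := by
    intro p hp
    refine List.count_eq_zero.mpr fun hmem => ?_
    obtain ⟨d, -, rfl⟩ := List.mem_map.mp hmem
    exact hg (hp.mp d.adj)
  rw [walkVector, hmem _ Iff.rfl, hmem _ ⟨fun h => h.symm, fun h => h.symm⟩, sub_self]

theorem walkVector_apply_of_isPath {a b : V} {P : H.Walk a b} (hP : P.IsPath)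
    (g : OrientedEdge G) :
    walkVector R G P g =
      if g.1 ∈ P.darts.map Dart.toProd then 1
      else if g.1.swap ∈ P.darts.map Dart.toProd then -1 else 0 := by
  rw [walkVector]
  set L := P.darts.map Dart.toProd with hLdef
  have hL : L.Nodup := (P.darts_nodup_of_support_nodup hP.support_nodup).map Dart.toProd_injective
  have hedges : (L.map fun p => s(p.1, p.2)).Nodup := by
    rw [hLdef, List.map_map]
    exact hP.isTrail.edges_nodup
  have hnot : ¬ (g.1 ∈ L ∧ g.1.swap ∈ L) := fun ⟨h1, h2⟩ =>
    g.2.1.ne (congrArg Prod.fst (List.inj_on_of_nodup_map hedges h1 h2 Sym2.eq_swap))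
  by_cases h1 : g.1 ∈ L
  · have h2 : g.1.swap ∉ L := fun h2 => hnot ⟨h1, h2⟩
    simp [h1, List.count_eq_one_of_mem hL h1, List.count_eq_zero_of_not_mem h2]
  · by_cases h2 : g.1.swap ∈ L
    · simp [h1, h2, List.count_eq_one_of_mem hL h2, List.count_eq_zero_of_not_mem h1]
    · simp [h1, h2, List.count_eq_zero_of_not_mem h1, List.count_eq_zero_of_not_mem h2]

end Walk

variable [Fintype V]

theorem vecMul_orientedIncMatrix (x : V → R) :
    x ᵥ* orientedIncMatrix R G = fun g => x g.1.2 - x g.1.1 := by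
  ext g
  change x ⬝ᵥ (orientedIncMatrix R G).col g = _
  rw [orientedIncMatrix_col, dotProduct_sub, dotProduct_single, dotProduct_single, mul_one,
    mul_one]

theorem sum_orientedIncMatrix : ∑ v, (orientedIncMatrix R G v : OrientedEdge G → R) = 0 := by
  funext g
  rw [Finset.sum_apply (M := fun _ => R) g Finset.univ fun v => orientedIncMatrix R G v]
  simpa [vecMul, dotProduct] using congrFun (vecMul_orientedIncMatrix (R := R) (G := G) 1) g

variable [DecidableRel G.Adj]

theorem mulVec_single_orientedIncMatrix (g : OrientedEdge G) :
    orientedIncMatrix R G *ᵥ Pi.single g 1 = Pi.single g.1.2 1 - Pi.single g.1.1 1 := by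
  rw [mulVec_single_one, orientedIncMatrix_col]

theorem mulVec_dartVector {a c : V} (h : G.Adj a c) :
    orientedIncMatrix R G *ᵥ dartVector R G (a, c) = Pi.single c 1 - Pi.single a 1 := by
  wlog hac : a < c generalizing a c
  · have := this h.symm (lt_of_le_of_ne (not_lt.mp hac) h.ne.symm)
    rw [← Prod.swap_swap (a, c), dartVector_swap, mulVec_neg, Prod.swap_prod_mk, this, neg_sub]
  have : dartVector R G (a, c) = Pi.single ⟨(a, c), hac, h⟩ 1 := by
    ext g
    have hswap : (a, c) ≠ g.1.swap := fun hg => by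
      have := g.2.1
      simp only [Prod.ext_iff, Prod.fst_swap, Prod.snd_swap] at hg
      rw [← hg.1, ← hg.2] at this
      exact lt_asymm hac this
    simp only [dartVector, if_neg hswap, sub_zero, Pi.single_apply, Subtype.ext_iff, eq_comm]
  rw [this, mulVec_single_orientedIncMatrix]

theorem mulVec_walkVector {H : SimpleGraph V} (hHG : H ≤ G) {a b : V} (P : H.Walk a b) :
    orientedIncMatrix R G *ᵥ walkVector R G P = Pi.single b 1 - Pi.single a 1 := by
  induction P with
  | nil => simp
  | cons h P ih =>
    rw [walkVector_cons, mulVec_add, mulVec_dartVector (hHG h), ih]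
    abel

/-- Each edge of the forest is a bridge; pairing `z` with the cut it separates isolates the value
of `z` on that edge. -/
theorem IsAcyclic.eq_zero_of_mulVec_orientedIncMatrix_eq_zero {T : SimpleGraph V}
    (hT : T.IsAcyclic) {z : OrientedEdge G → R} (hz : orientedIncMatrix R G *ᵥ z = 0)
    (hzT : ∀ g : OrientedEdge G, ¬ T.Adj g.1.1 g.1.2 → z g = 0) : z = 0 := by
  classical
  funext g₀
  by_cases hg₀ : T.Adj g₀.1.1 g₀.1.2
  swap
  · exact hzT g₀ hg₀
  set D := T.deleteEdges {s(g₀.1.1, g₀.1.2)}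
  set side : V → R := fun v => if D.Reachable g₀.1.1 v then 1 else 0
  have hbridge : ¬ D.Reachable g₀.1.1 g₀.1.2 :=
    isBridge_iff.mp (isAcyclic_iff_forall_adj_isBridge.mp hT hg₀)
  have hcut : (side ᵥ* orientedIncMatrix R G) ⬝ᵥ z = 0 := by
    rw [← dotProduct_mulVec, hz, dotProduct_zero]
  rw [vecMul_orientedIncMatrix, dotProduct, Finset.sum_eq_single g₀] at hcut
  · simpa [side, hbridge] using hcut
  · intro g _ hg
    by_cases hgT : T.Adj g.1.1 g.1.2
    · have hgD : D.Adj g.1.1 g.1.2 := by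
        rw [deleteEdges_adj, Set.mem_singleton_iff]
        exact ⟨hgT, fun h => hg (OrientedEdge.eq_of_sym2_eq h)⟩
      have hside : side g.1.2 = side g.1.1 := by
        have : D.Reachable g₀.1.1 g.1.2 ↔ D.Reachable g₀.1.1 g.1.1 :=
          ⟨fun h => h.trans hgD.reachable.symm, fun h => h.trans hgD.reachable⟩
        simp only [side, this]
      rw [hside, sub_self, zero_mul]
    · rw [hzT g hgT, mul_zero]
  · simp

end SimpleGraph

namespace IsEdgewiseKirchhoffMatrix

variable {V : Type*} [LinearOrder V] {G T : SimpleGraph V} {S : V}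
  {M : Matrix (KirchhoffRow G T S) (OrientedEdge G) ℚ}

theorem row_inl (hM : IsEdgewiseKirchhoffMatrix G T S M) (w : {w : V // w ≠ S}) :
    M (Sum.inl w) = orientedIncMatrix ℚ G w :=
  funext (hM.1 w)

theorem row_inr (hM : IsEdgewiseKirchhoffMatrix G T S M)
    (f : {e : OrientedEdge G // ¬ T.Adj e.1.1 e.1.2}) {P : T.Walk f.1.1.2 f.1.1.1}
    (hP : P.IsPath) : M (Sum.inr f) = Pi.single f.1 1 + walkVector ℚ G P := by
  funext g
  rw [hM.2 f g P hP, Pi.add_apply]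
  by_cases hgf : g = f.1
  · subst hgf
    rw [if_pos rfl, Pi.single_eq_same, walkVector_apply_of_not_adj P f.2, add_zero]
  · rw [if_neg hgf, Pi.single_eq_of_ne hgf, zero_add, walkVector_apply_of_isPath hP]
    rfl

theorem row_inr_apply_of_not_adj (hM : IsEdgewiseKirchhoffMatrix G T S M) (hT : T.Connected)
    (f : {e : OrientedEdge G // ¬ T.Adj e.1.1 e.1.2}) {g : OrientedEdge G}
    (hg : ¬ T.Adj g.1.1 g.1.2) : M (Sum.inr f) g = (Pi.single f.1 1 : OrientedEdge G → ℚ) g := by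
  obtain ⟨P⟩ := hT.preconnected f.1.1.2 f.1.1.1
  rw [hM.row_inr f P.bypass_isPath, Pi.add_apply, walkVector_apply_of_not_adj _ hg, add_zero]

theorem exists_intCast_eq_row_inr_apply (hM : IsEdgewiseKirchhoffMatrix G T S M)
    (hT : T.Connected) (f : {e : OrientedEdge G // ¬ T.Adj e.1.1 e.1.2}) (g : OrientedEdge G) :
    ∃ k : ℤ, M (Sum.inr f) g = k := by
  obtain ⟨P⟩ := hT.preconnected f.1.1.2 f.1.1.1
  rw [hM.2 f g P.bypass P.bypass_isPath]
  split_ifs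
  exacts [⟨1, by simp⟩, ⟨1, by simp⟩, ⟨-1, by simp⟩, ⟨0, by simp⟩]

variable [Fintype V]

theorem orientedIncMatrix_mem_span (hM : IsEdgewiseKirchhoffMatrix G T S M) (v : V) :
    orientedIncMatrix ℚ G v ∈ Submodule.span ℤ (Set.range M) := by
  have hrow : ∀ w ≠ S, orientedIncMatrix ℚ G w ∈ Submodule.span ℤ (Set.range M) :=
    fun w hw => hM.row_inl ⟨w, hw⟩ ▸ Submodule.subset_span ⟨_, rfl⟩
  by_cases hv : v = S
  · subst hv
    have hsum := Finset.add_sum_erase Finset.univ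
      (fun w => (orientedIncMatrix ℚ G w : OrientedEdge G → ℚ)) (Finset.mem_univ v)
    rw [sum_orientedIncMatrix, add_eq_zero_iff_eq_neg] at hsum
    rw [hsum]
    exact Submodule.neg_mem _ (Submodule.sum_mem _ fun w hw => hrow w (Finset.ne_of_mem_erase hw))
  · exact hrow v hv

variable [DecidableRel G.Adj]

theorem mulVec_row_inr (hM : IsEdgewiseKirchhoffMatrix G T S M) (hTG : T ≤ G)
    (hT : T.Connected) (f : {e : OrientedEdge G // ¬ T.Adj e.1.1 e.1.2}) :
    orientedIncMatrix ℚ G *ᵥ M (Sum.inr f) = 0 := by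
  obtain ⟨P⟩ := hT.preconnected f.1.1.2 f.1.1.1
  rw [hM.row_inr f P.bypass_isPath, mulVec_add, mulVec_single_orientedIncMatrix,
    mulVec_walkVector hTG]
  abel

theorem eq_sum_smul_row_inr [DecidableRel T.Adj] (hM : IsEdgewiseKirchhoffMatrix G T S M)
    (hTG : T ≤ G) (hT : T.IsTree) {z : OrientedEdge G → ℚ}
    (hz : orientedIncMatrix ℚ G *ᵥ z = 0) : z = ∑ f, z f.1 • M (Sum.inr f) := by
  rw [← sub_eq_zero]
  refine hT.isAcyclic.eq_zero_of_mulVec_orientedIncMatrix_eq_zero ?_ fun g hg => ?_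
  · simp [mulVec_sub, mulVec_sum, mulVec_smul, hz, hM.mulVec_row_inr hTG hT.connected]
  · rw [Pi.sub_apply, Finset.sum_apply, Finset.sum_eq_single ⟨g, hg⟩]
    · simp [hM.row_inr_apply_of_not_adj hT.connected _ hg]
    · intro f _ hf
      rw [Pi.smul_apply, hM.row_inr_apply_of_not_adj hT.connected _ hg,
        Pi.single_eq_of_ne (fun h => hf (Subtype.ext h.symm)), smul_zero]
    · simp

theorem row_mem_span_int {T' : SimpleGraph V} {S' : V}
    {M' : Matrix (KirchhoffRow G T' S') (OrientedEdge G) ℚ}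
    (hM : IsEdgewiseKirchhoffMatrix G T S M) (hTG : T ≤ G) (hT : T.Connected)
    (hM' : IsEdgewiseKirchhoffMatrix G T' S' M') (hT'G : T' ≤ G) (hT' : T'.IsTree)
    (r : KirchhoffRow G T S) : M r ∈ Submodule.span ℤ (Set.range M') := by
  classical
  rcases r with w | f
  · rw [hM.row_inl]
    exact hM'.orientedIncMatrix_mem_span w
  · choose k hk using hM.exists_intCast_eq_row_inr_apply hT f
    rw [hM'.eq_sum_smul_row_inr hT'G hT' (hM.mulVec_row_inr hTG hT f)]
    refine Submodule.sum_mem _ fun f' _ => ?_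
    rw [hk, Int.cast_smul_eq_zsmul]
    exact Submodule.smul_mem _ _ (Submodule.subset_span ⟨_, rfl⟩)

end IsEdgewiseKirchhoffMatrix

namespace Matrix

variable {m n k K : Type*} [Fintype n]

theorem exists_intCast_mul_eq_of_span_le [Ring K] {N : Matrix m k K} {N' : Matrix n k K}
    (h : Submodule.span ℤ (Set.range N) ≤ Submodule.span ℤ (Set.range N')) :
    ∃ A : Matrix m n ℤ, A.map (Int.cast : ℤ → K) * N' = N := by
  choose A hA using fun i =>
    (Submodule.mem_span_range_iff_exists_fun ℤ).mp (h (Submodule.subset_span ⟨i, rfl⟩))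
  refine ⟨Matrix.of A, ?_⟩
  ext i j
  rw [mul_apply, ← hA i, Finset.sum_apply (M := fun _ => K)]
  simp [zsmul_eq_mul]

theorem abs_det_eq_of_span_int_eq [DecidableEq n] [CommRing K] [LinearOrder K]
    [IsStrictOrderedRing K] {N N' : Matrix n n K}
    (h : Submodule.span ℤ (Set.range N) = Submodule.span ℤ (Set.range N')) :
    |N.det| = |N'.det| := by
  obtain ⟨A, hA⟩ := exists_intCast_mul_eq_of_span_le h.le
  obtain ⟨B, hB⟩ := exists_intCast_mul_eq_of_span_le h.ge
  have hN : N.det = A.det * N'.det := by rw [← hA, det_mul, Int.cast_det]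
  have hN' : N'.det = B.det * N.det := by rw [← hB, det_mul, Int.cast_det]
  rcases eq_or_ne N.det 0 with h0 | h0
  · rw [h0, hN', h0, mul_zero]
  · have hAB : A.det * B.det = 1 := by
      have : ((A.det * B.det : ℤ) : K) * N.det = 1 * N.det := by
        rw [Int.cast_mul, mul_assoc, ← hN', ← hN, one_mul]
      exact_mod_cast mul_right_cancel₀ h0 this
    rw [hN, abs_mul, ← Int.cast_abs, Int.isUnit_iff_abs_eq.mp (IsUnit.of_mul_eq_one _ hAB),
      Int.cast_one, one_mul]

end Matrix

theorem abs_det_edgewiseKirchhoff_well_defined_general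
    {V : Type*} [Fintype V] [LinearOrder V]
    (G T T' : SimpleGraph V) [DecidableRel G.Adj] (S S' : V)
    (hTsub : T ≤ G) (hTtree : T.IsTree)
    (hT'sub : T' ≤ G) (hT'tree : T'.IsTree)
    (M : Matrix (KirchhoffRow G T S) (OrientedEdge G) ℚ)
    (hM : IsEdgewiseKirchhoffMatrix G T S M)
    (M' : Matrix (KirchhoffRow G T' S') (OrientedEdge G) ℚ)
    (hM' : IsEdgewiseKirchhoffMatrix G T' S' M')
    (e : KirchhoffRow G T S ≃ OrientedEdge G)
    (e' : KirchhoffRow G T' S' ≃ OrientedEdge G) :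
    |(M.submatrix e.symm id).det| = |(M'.submatrix e'.symm id).det| := by
  have hrange : Set.range (M.submatrix e.symm id) = Set.range M := e.symm.surjective.range_comp M
  have hrange' : Set.range (M'.submatrix e'.symm id) = Set.range M' :=
    e'.symm.surjective.range_comp M'
  apply Matrix.abs_det_eq_of_span_int_eq
  rw [hrange, hrange']
  refine le_antisymm (Submodule.span_le.mpr ?_) (Submodule.span_le.mpr ?_) <;> rintro _ ⟨r, rfl⟩
  · exact hM.row_mem_span_int hTsub hTtree.connected hM' hT'sub hT'tree r
  · exact hM'.row_mem_span_int hT'sub hT'tree.connected hM hTsub hTtree r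

/-- **Independence of the edgewise Kirchhoff determinant from the choices made.**
For a finite connected simple graph `G` with at least two vertices, the absolute value
of the determinant of the edgewise Kirchhoff matrix does not depend on the choice of
the pole or of the spanning tree: `|det M_{G,S,T}| = |det M_{G,S',T'}|`. -/
theorem abs_det_edgewiseKirchhoff_well_defined
    {V : Type*} [Fintype V] [LinearOrder V]
    (G T T' : SimpleGraph V) [DecidableRel G.Adj] (S S' : V)
    (hm : 2 ≤ Fintype.card V) (hG : G.Connected)
    (hTsub : T ≤ G) (hTtree : T.IsTree)
    (hT'sub : T' ≤ G) (hT'tree : T'.IsTree)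
    (M : Matrix (KirchhoffRow G T S) (OrientedEdge G) ℚ)
    (hM : IsEdgewiseKirchhoffMatrix G T S M)
    (M' : Matrix (KirchhoffRow G T' S') (OrientedEdge G) ℚ)
    (hM' : IsEdgewiseKirchhoffMatrix G T' S' M')
    (e : KirchhoffRow G T S ≃ OrientedEdge G)
    (e' : KirchhoffRow G T' S' ≃ OrientedEdge G) :
    |(M.submatrix e.symm id).det| = |(M'.submatrix e'.symm id).det| :=
  abs_det_edgewiseKirchhoff_well_defined_general G T T' S S' hTsub hTtree hT'sub hT'tree M hM M' hM'
    e e'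
end
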